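/- arXiv:2503.19277 — 10 statements merged into one kernel-verified Lean document; each statement's English description precedes it below -/
import Mathlib

section
/- Let K be a field and let A be a unital commutative integral domain K-algebra with an involution ♮, extended entrywise-transpose to the matrix algebra M_n(A) via (a_{ij})^♮ = (a_{ji}^♮). If n ≥ 3, then the Lie algebra K_{M_n(A)} of skew-symmetric elements (elements X with X^♮ = -X) under the commutator bracket is not solvable. -/
open Matrix

/-- The skew-symmetric elements `{x | star x = -x}` as a `K`-submodule. -/
def skewSubmodule (K M : Type*) [Field K] [StarRing K] [TrivialStar K]
    [AddCommGroup M] [Module K M] [StarAddMonoid M] [StarModule K M] :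
    Submodule K M where
  carrier := {x | star x = -x}
  add_mem' := by
    intro a b ha hb
    simp only [Set.mem_setOf_eq] at *
    rw [star_add, ha, hb, neg_add]
  zero_mem' := by simp
  smul_mem' := by
    intro c x hx
    simp only [Set.mem_setOf_eq] at *
    rw [star_smul, hx, star_trivial, smul_neg]

/-- One step of the derived series: span of commutators. -/
def derivedStep (K A : Type*) [Field K] [Ring A] [Algebra K A] (L : Submodule K A) :
    Submodule K A :=
  Submodule.span K {z | ∃ x ∈ L, ∃ y ∈ L, z = x * y - y * x}

/-- Derived series of a subspace under the commutator bracket. -/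
def lieDerSeries (K A : Type*) [Field K] [Ring A] [Algebra K A] (L : Submodule K A) :
    ℕ → Submodule K A
  | 0 => L
  | n + 1 => derivedStep K A (lieDerSeries K A L n)

/-- Lower central series of a subspace under the commutator bracket. -/
def lowerCentral (K A : Type*) [Field K] [Ring A] [Algebra K A] (L : Submodule K A) :
    ℕ → Submodule K A
  | 0 => L
  | n + 1 => Submodule.span K
      {z | ∃ x ∈ lowerCentral K A L n, ∃ y ∈ L, z = x * y - y * x}

/-- Skew-symmetric matrices (w.r.t. plain transpose) as a submodule. -/
def skewT (K : Type*) [Field K] (n : ℕ) (A : Type*) [Ring A] [Algebra K A] :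
    Submodule K (Matrix (Fin n) (Fin n) A) where
  carrier := {X | Xᵀ = -X}
  add_mem' := by
    intro a b ha hb
    simp only [Set.mem_setOf_eq] at *
    rw [transpose_add, ha, hb, neg_add]
  zero_mem' := by simp
  smul_mem' := by
    intro c x hx
    simp only [Set.mem_setOf_eq] at *
    rw [transpose_smul, hx, smul_neg]

/-- For a commutative integral domain `K`-algebra `A` with involution,
extended entrywise-transpose to `Mₙ(A)`, the Lie algebra of skew-symmetric elements
is not solvable when `n ≥ 3`. -/
theorem skew_matrices_not_solvable_of_three_le
    (K : Type*) [Field K] [StarRing K] [TrivialStar K]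
    (A : Type*) [CommRing A] [IsDomain A] [Algebra K A] [StarRing A] [StarModule K A]
    (n : ℕ) (hn : 3 ≤ n) :
    ¬ ∃ m, lieDerSeries K (Matrix (Fin n) (Fin n) A)
        (skewSubmodule K (Matrix (Fin n) (Fin n) A)) m = ⊥ := by
  rintro ⟨m, hm⟩
  have h0 : (0:ℕ) < n := by omega
  have h1 : (1:ℕ) < n := by omega
  have h2 : (2:ℕ) < n := by omega
  set i0 : Fin n := ⟨0, h0⟩ with hi0
  set i1 : Fin n := ⟨1, h1⟩ with hi1
  set i2 : Fin n := ⟨2, h2⟩ with hi2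
  have h01 : i0 ≠ i1 := by simp [hi0, hi1, Fin.ext_iff]
  have h02 : i0 ≠ i2 := by simp [hi0, hi2, Fin.ext_iff]
  have h12 : i1 ≠ i2 := by simp [hi1, hi2, Fin.ext_iff]
  set E : Fin n → Fin n → Matrix (Fin n) (Fin n) A :=
    fun i j => Matrix.single i j 1 with hE
  have hstar : ∀ i j : Fin n, star (E i j) = E j i := by
    intro i j
    ext k l
    simp [hE, Matrix.star_apply, Matrix.single, and_comm,
      apply_ite (star : A → A)]
  set a : Matrix (Fin n) (Fin n) A := E i0 i1 - E i1 i0 with ha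
  set b : Matrix (Fin n) (Fin n) A := E i0 i2 - E i2 i0 with hb
  set c : Matrix (Fin n) (Fin n) A := E i1 i2 - E i2 i1 with hc
  have hmul : ∀ i j l : Fin n, E i j * E j l = E i l := by
    intro i j l
    have := Matrix.single_mul_single_same (i := i) (j := j) (c := (1:A)) l (1:A)
    rw [one_mul] at this
    exact this
  have hmul0 : ∀ i j k l : Fin n, j ≠ k → E i j * E k l = 0 := by
    intro i j k l h
    exact Matrix.single_mul_single_of_ne (i := i) (j := j) (k := k) (c := (1:A)) h (1:A)
  -- commutator computations
  have hab : a * b - b * a = -c := by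
    rw [ha, hb, hc]
    simp only [sub_mul, mul_sub, hmul]
    simp only [hmul0 _ _ _ _ (Ne.symm h01), hmul0 _ _ _ _ (Ne.symm h02),
      hmul0 _ _ _ _ (Ne.symm h12), hmul0 _ _ _ _ h01, hmul0 _ _ _ _ h02,
      hmul0 _ _ _ _ h12]
    abel
  have hbc : b * c - c * b = -a := by
    rw [ha, hb, hc]
    simp only [sub_mul, mul_sub, hmul]
    simp only [hmul0 _ _ _ _ (Ne.symm h01), hmul0 _ _ _ _ (Ne.symm h02),
      hmul0 _ _ _ _ (Ne.symm h12), hmul0 _ _ _ _ h01, hmul0 _ _ _ _ h02,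
      hmul0 _ _ _ _ h12]
    abel
  have hac : a * c - c * a = b := by
    rw [ha, hb, hc]
    simp only [sub_mul, mul_sub, hmul]
    simp only [hmul0 _ _ _ _ (Ne.symm h01), hmul0 _ _ _ _ (Ne.symm h02),
      hmul0 _ _ _ _ (Ne.symm h12), hmul0 _ _ _ _ h01, hmul0 _ _ _ _ h02,
      hmul0 _ _ _ _ h12]
    abel
  -- membership through the derived series
  set L : ℕ → Submodule K (Matrix (Fin n) (Fin n) A) :=
    fun m => lieDerSeries K (Matrix (Fin n) (Fin n) A)
      (skewSubmodule K (Matrix (Fin n) (Fin n) A)) m with hL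
  have key : ∀ m, a ∈ L m ∧ b ∈ L m ∧ c ∈ L m := by
    intro m
    induction m with
    | zero =>
      refine ⟨?_, ?_, ?_⟩
      · show star a = -a
        rw [ha, star_sub, hstar, hstar]; abel
      · show star b = -b
        rw [hb, star_sub, hstar, hstar]; abel
      · show star c = -c
        rw [hc, star_sub, hstar, hstar]; abel
    | succ m ih =>
      obtain ⟨hA, hB, hC⟩ := ih
      have mem : ∀ x ∈ L m, ∀ y ∈ L m, x * y - y * x ∈ L (m + 1) := by
        intro x hx y hy
        exact Submodule.subset_span ⟨x, hx, y, hy, rfl⟩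
      refine ⟨?_, ?_, ?_⟩
      · have := mem b hB c hC
        rw [hbc] at this
        simpa using (L (m+1)).neg_mem this
      · have := mem a hA c hC
        rwa [hac] at this
      · have := mem a hA b hB
        rw [hab] at this
        simpa using (L (m+1)).neg_mem this
  have hmem := (key m).1
  have hbot : L m = ⊥ := hm
  rw [hbot] at hmem
  have hzero : a = 0 := by simpa using hmem
  have happ := congrArg (fun M : Matrix (Fin n) (Fin n) A => M i0 i1) hzero
  simp [ha, hE, Matrix.single, h01, Ne.symm h01] at happ
end

section
/- Let K be a field of characteristic 2 and A a unital integral domain K-algebra with involution ♮, extended to M_2(A) by (a_{ij})^♮ = (a_{ji}^♮). Then the Lie algebra K_{M_2(A)} of skew-symmetric elements is not Lie nilpotent. -/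
open Matrix

/-! In characteristic `2` skew-symmetric means self-adjoint, so `U = !![0, 1; 1, 0]` and
`E = !![1, 0; 0, 0]` are skew. Since `U * E - E * U = U`, the nonzero matrix `U` survives in
every term of the lower central series. -/

theorem self_mem_lowerCentral_of_commutator_eq {K A : Type*} [Field K] [Ring A] [Algebra K A]
    {L : Submodule K A} {x y : A} (hx : x ∈ L) (hy : y ∈ L) (hxy : x * y - y * x = x) :
    ∀ m, x ∈ lowerCentral K A L m
  | 0 => hx
  | m + 1 => Submodule.subset_span ⟨x, self_mem_lowerCentral_of_commutator_eq hx hy hxy m, y, hy,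
      hxy.symm⟩

theorem IsSelfAdjoint.mem_skewSubmodule (K : Type*) {M : Type*} [Field K] [StarRing K]
    [TrivialStar K] [Ring M] [CharP M 2] [Module K M] [StarAddMonoid M] [StarModule K M]
    {x : M} (hx : IsSelfAdjoint x) : x ∈ skewSubmodule K M :=
  show star x = -x by rw [hx.star_eq, CharTwo.neg_eq]

theorem Matrix.isSelfAdjoint_fin_two {R : Type*} [AddMonoid R] [StarAddMonoid R] {a d : R}
    (ha : IsSelfAdjoint a) (hd : IsSelfAdjoint d) (b : R) :
    IsSelfAdjoint !![a, b; star b, d] := by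
  ext i j
  fin_cases i <;> fin_cases j <;> simp [ha.star_eq, hd.star_eq]

theorem Matrix.commutator_swap_diagonal_fin_two {R : Type*} [Ring R] :
    !![0, 1; 1, 0] * !![1, 0; 0, 0] - !![1, 0; 0, 0] * !![0, 1; 1, 0] = !![0, -1; 1, (0 : R)] := by
  simp

/-- In characteristic `2`, the Lie algebra of skew-symmetric elements of
`M₂(A)` over an integral domain `K`-algebra `A` with involution is not Lie nilpotent. -/
theorem skew_M2_not_nilpotent_char_two
    (K : Type*) [Field K] [StarRing K] [TrivialStar K] (hK : ringChar K = 2)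
    (A : Type*) [Ring A] [IsDomain A] [Algebra K A] [StarRing A] [StarModule K A] :
    ¬ ∃ m, lowerCentral K (Matrix (Fin 2) (Fin 2) A)
        (skewSubmodule K (Matrix (Fin 2) (Fin 2) A)) m = ⊥ := by
  have : CharP K 2 := ringChar.of_eq hK
  have : CharP A 2 := charP_of_injective_algebraMap' K 2
  have hswap : IsSelfAdjoint !![0, 1; 1, (0 : A)] := by
    simpa using Matrix.isSelfAdjoint_fin_two (.zero A) (.zero A) 1
  have hdiag : IsSelfAdjoint !![1, 0; 0, (0 : A)] := by
    simpa using Matrix.isSelfAdjoint_fin_two (.one A) (.zero A) 0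
  have hcomm := Matrix.commutator_swap_diagonal_fin_two (R := A)
  rw [CharTwo.neg_eq] at hcomm
  rintro ⟨m, hm⟩
  have hmem := self_mem_lowerCentral_of_commutator_eq (hswap.mem_skewSubmodule K)
    (hdiag.mem_skewSubmodule K) hcomm m
  rw [hm, Submodule.mem_bot] at hmem
  simpa using congrFun₂ hmem 0 1
end

section
/- Let K be a field with char(K) ≠ 2, and let A be a unital integral domain K-algebra with a non-trivial involution ♮ (there exists a ∈ A with a^♮ ≠ a), extended to M_2(A) by (a_{ij})^♮ = (a_{ji}^♮). Then the Lie algebra K_{M_2(A)} of skew-symmetric elements is not solvable. -/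
open Matrix

/-!
Write `b = a - a^♮ ≠ 0`, so `b^♮ = -b`. With `H x = diag(x, -x)`, `X x = [[0, x], [x, 0]]` and
`Y x = [[0, x], [-x, 0]]` one has `[H x, Y y] = 2 X (xy)`, `[Y y, X x] = 2 H (xy)` and
`[H x, X y] = 2 Y (xy)` for commuting `x, y`, and `H x, X x` resp. `Y x` are skew when `x` is
skew resp. symmetric. Hence `H (b^(2k+1))`, `X (b^(2k+1))`, `Y (b^(2k+2))` lie in the skew part
for all `k`, and since `2` is invertible each derived step keeps them for all `k` beyond some
threshold. As `A` is a domain these matrices never vanish, so the derived series never reaches `0`.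
-/

lemma mem_derivedStep_of_smul_eq {K A : Type*} [Field K] [Ring A] [Algebra K A]
    {L : Submodule K A} {x y z : A} (hx : x ∈ L) (hy : y ∈ L) {c : K} (hc : c ≠ 0)
    (h : c • z = x * y - y * x) : z ∈ derivedStep K A L :=
  ((derivedStep K A L).smul_mem_iff hc).mp (h ▸ Submodule.subset_span ⟨x, hx, y, hy, rfl⟩)

section SlTwoTriple

variable {A : Type*} [Ring A]

def matH (x : A) : Matrix (Fin 2) (Fin 2) A := !![x, 0; 0, -x]

def matX (x : A) : Matrix (Fin 2) (Fin 2) A := !![0, x; x, 0]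

def matY (x : A) : Matrix (Fin 2) (Fin 2) A := !![0, x; -x, 0]

lemma matH_ne_zero {x : A} (hx : x ≠ 0) : matH x ≠ 0 :=
  fun h ↦ hx (by simpa [matH] using congr_fun₂ h 0 0)

variable {K : Type*} [Field K] [Algebra K A] {x y : A}

lemma two_smul_matX_eq_commutator (h : Commute x y) :
    (2 : K) • matX (x * y) = matH x * matY y - matY y * matH x := by
  ext i j
  fin_cases i <;> fin_cases j <;>
    simp [matH, matX, matY, two_smul, sub_eq_add_neg, h.eq]

lemma two_smul_matH_eq_commutator (h : Commute x y) :
    (2 : K) • matH (x * y) = matY y * matX x - matX x * matY y := by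
  ext i j
  fin_cases i <;> fin_cases j <;>
    simp [matH, matX, matY, two_smul, sub_eq_add_neg, h.eq]

lemma two_smul_matY_eq_commutator (h : Commute x y) :
    (2 : K) • matY (x * y) = matH x * matX y - matX y * matH x := by
  ext i j
  fin_cases i <;> fin_cases j <;>
    simp [matH, matX, matY, two_smul, sub_eq_add_neg, h.eq]

end SlTwoTriple

section Skew

variable {K A : Type*} [Field K] [StarRing K] [TrivialStar K] [Ring A] [StarRing A]
  [Algebra K A] [StarModule K A] {x : A}

lemma matH_mem_skewSubmodule (hx : star x = -x) :
    matH x ∈ skewSubmodule K (Matrix (Fin 2) (Fin 2) A) := by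
  change star (matH x) = -matH x
  ext i j
  fin_cases i <;> fin_cases j <;> simp [matH, Matrix.star_apply, hx]

lemma matX_mem_skewSubmodule (hx : star x = -x) :
    matX x ∈ skewSubmodule K (Matrix (Fin 2) (Fin 2) A) := by
  change star (matX x) = -matX x
  ext i j
  fin_cases i <;> fin_cases j <;> simp [matX, Matrix.star_apply, hx]

lemma matY_mem_skewSubmodule (hx : star x = x) :
    matY x ∈ skewSubmodule K (Matrix (Fin 2) (Fin 2) A) := by
  change star (matY x) = -matY x
  ext i j
  fin_cases i <;> fin_cases j <;> simp [matY, Matrix.star_apply, hx]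

end Skew

section PowTriples

variable {K A : Type*} [Field K] [Ring A] [Algebra K A]

def ContainsPowTriplesFrom (S : Submodule K (Matrix (Fin 2) (Fin 2) A)) (b : A) (N : ℕ) : Prop :=
  ∀ k, N ≤ k →
    matH (b ^ (2 * k + 1)) ∈ S ∧ matX (b ^ (2 * k + 1)) ∈ S ∧ matY (b ^ (2 * k + 2)) ∈ S

lemma ContainsPowTriplesFrom.derivedStep {S : Submodule K (Matrix (Fin 2) (Fin 2) A)} {b : A}
    {N : ℕ} (h2 : (2 : K) ≠ 0) (h : ContainsPowTriplesFrom S b N) :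
    ContainsPowTriplesFrom (derivedStep K _ S) b (2 * N + 1) := by
  intro k hk
  obtain ⟨j, rfl⟩ := Nat.exists_eq_add_of_le hk
  obtain ⟨hH, hX, -⟩ := h N le_rfl
  have hY := (h (N + j) (by omega)).2.2
  have hX' := (h (N + j + 1) (by omega)).2.1
  have hodd : b ^ (2 * (2 * N + 1 + j) + 1) = b ^ (2 * N + 1) * b ^ (2 * (N + j) + 2) := by
    rw [← pow_add]; ring_nf
  have heven : b ^ (2 * (2 * N + 1 + j) + 2) = b ^ (2 * N + 1) * b ^ (2 * (N + j + 1) + 1) := by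
    rw [← pow_add]; ring_nf
  refine ⟨?_, ?_, ?_⟩
  · rw [hodd]
    exact mem_derivedStep_of_smul_eq hY hX h2
      (two_smul_matH_eq_commutator (Commute.pow_pow_self b _ _))
  · rw [hodd]
    exact mem_derivedStep_of_smul_eq hH hY h2
      (two_smul_matX_eq_commutator (Commute.pow_pow_self b _ _))
  · rw [heven]
    exact mem_derivedStep_of_smul_eq hH hX' h2
      (two_smul_matY_eq_commutator (Commute.pow_pow_self b _ _))

end PowTriples

lemma exists_containsPowTriplesFrom_lieDerSeries {K A : Type*} [Field K] [StarRing K]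
    [TrivialStar K] [Ring A] [StarRing A] [Algebra K A] [StarModule K A] (h2 : (2 : K) ≠ 0)
    {b : A} (hb : star b = -b) (n : ℕ) :
    ∃ N, ContainsPowTriplesFrom
      (lieDerSeries K _ (skewSubmodule K (Matrix (Fin 2) (Fin 2) A)) n) b N := by
  induction n with
  | zero =>
    refine ⟨0, fun k _ => ?_⟩
    have hodd : star (b ^ (2 * k + 1)) = -b ^ (2 * k + 1) := by
      rw [star_pow, hb, Odd.neg_pow ⟨k, rfl⟩]
    have heven : star (b ^ (2 * k + 2)) = b ^ (2 * k + 2) := by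
      rw [star_pow, hb, Even.neg_pow ⟨k + 1, by ring⟩]
    exact ⟨matH_mem_skewSubmodule hodd, matX_mem_skewSubmodule hodd,
      matY_mem_skewSubmodule heven⟩
  | succ n ih =>
    obtain ⟨N, hN⟩ := ih
    exact ⟨2 * N + 1, hN.derivedStep h2⟩

/-- If `char K ≠ 2` and the involution on the integral domain `K`-algebra
`A` is non-trivial, then the skew-symmetric elements of `M₂(A)` form a non-solvable Lie
algebra. -/
theorem skew_M2_not_solvable_char_ne_two_nontrivial
    (K : Type*) [Field K] [StarRing K] [TrivialStar K] (hK : ringChar K ≠ 2)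
    (A : Type*) [Ring A] [IsDomain A] [Algebra K A] [StarRing A] [StarModule K A]
    (ha : ∃ a : A, star a ≠ a) :
    ¬ ∃ m, lieDerSeries K (Matrix (Fin 2) (Fin 2) A)
        (skewSubmodule K (Matrix (Fin 2) (Fin 2) A)) m = ⊥ := by
  rintro ⟨m, hm⟩
  obtain ⟨a, ha⟩ := ha
  have hb : star (a - star a) = -(a - star a) := by rw [star_sub, star_star, neg_sub]
  have hb0 : a - star a ≠ 0 := sub_ne_zero.mpr ha.symm
  obtain ⟨N, hN⟩ := exists_containsPowTriplesFrom_lieDerSeries (Ring.two_ne_zero hK) hb m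
  have hH := (hN N le_rfl).1
  rw [hm, Submodule.mem_bot] at hH
  exact matH_ne_zero (pow_ne_zero _ hb0) hH
end

section
/- Let K be a field of characteristic 2. Then the Lie algebra of skew-symmetric 2×2 matrices over K (equivalently symmetric matrices, since char = 2) is solvable of derived length exactly 2 but is not Lie nilpotent. -/
open Matrix

/-! In characteristic 2 the skew-symmetric matrices are the symmetric ones, and the commutator of
two symmetric `2 × 2` matrices is always a multiple of `J = !![0, 1; -1, 0]`, while
`J = [J, E₁₁]` with `E₁₁ = !![1, 0; 0, 0]` symmetric. So the derived algebra is the line `K ∙ J`,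
which is abelian, and `J` survives in every term of the lower central series. -/

section LieSeries

variable {K A : Type*} [Field K] [Ring A] [Algebra K A]

theorem derivedStep_span_singleton (a : A) : derivedStep K A (Submodule.span K {a}) = ⊥ := by
  rw [eq_bot_iff, derivedStep, Submodule.span_le]
  rintro z ⟨x, hx, y, hy, rfl⟩
  obtain ⟨s, rfl⟩ := Submodule.mem_span_singleton.mp hx
  obtain ⟨t, rfl⟩ := Submodule.mem_span_singleton.mp hy
  simp [smul_smul, mul_comm s t]

theorem mem_lowerCentral_of_eq_commutator {L : Submodule K A} {a b : A} (ha : a ∈ L)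
    (hb : b ∈ L) (hab : a = a * b - b * a) (n : ℕ) : a ∈ lowerCentral K A L n := by
  induction n with
  | zero => exact ha
  | succ n ih => exact Submodule.subset_span ⟨a, ih, b, hb, hab⟩

theorem lowerCentral_ne_bot_of_eq_commutator {L : Submodule K A} {a b : A} (ha : a ∈ L)
    (hb : b ∈ L) (hab : a = a * b - b * a) (ha0 : a ≠ 0) (n : ℕ) :
    lowerCentral K A L n ≠ ⊥ := fun h =>
  ha0 <| (Submodule.mem_bot K).mp (h ▸ mem_lowerCentral_of_eq_commutator ha hb hab n)

end LieSeries

namespace Matrix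

theorem mem_skewT_iff_isSymm {K A : Type*} [Field K] [Ring A] [Algebra K A] [CharP A 2]
    {n : ℕ} {X : Matrix (Fin n) (Fin n) A} : X ∈ skewT K n A ↔ X.IsSymm := by
  have hneg : -X = X := by ext i j; exact CharTwo.neg_eq _
  change Xᵀ = -X ↔ Xᵀ = X
  rw [hneg]

theorem commutator_of_isSymm {R : Type*} [CommRing R] {x y : Matrix (Fin 2) (Fin 2) R}
    (hx : x.IsSymm) (hy : y.IsSymm) :
    x * y - y * x =
      (x 0 0 * y 0 1 + x 0 1 * y 1 1 - x 0 1 * y 0 0 - x 1 1 * y 0 1) • !![0, 1; -1, 0] := by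
  ext i j
  fin_cases i <;> fin_cases j <;> simp [mul_apply, Fin.sum_univ_two, hx.apply, hy.apply] <;> ring

theorem symplectic_mem_skewT {K A : Type*} [Field K] [Ring A] [Algebra K A] :
    !![0, 1; -1, 0] ∈ skewT K 2 A := by
  change _ = _
  ext i j
  fin_cases i <;> fin_cases j <;> simp

theorem single_zero_zero_mem_skewT {K A : Type*} [Field K] [Ring A] [Algebra K A] [CharP A 2] :
    !![1, 0; 0, 0] ∈ skewT K 2 A := by
  rw [mem_skewT_iff_isSymm, IsSymm.ext_iff]
  intro i j
  fin_cases i <;> fin_cases j <;> rfl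

theorem symplectic_eq_commutator_single_zero_zero {R : Type*} [Ring R] [CharP R 2] :
    (!![0, 1; -1, 0] : Matrix (Fin 2) (Fin 2) R) =
      !![0, 1; -1, 0] * !![1, 0; 0, 0] - !![1, 0; 0, 0] * !![0, 1; -1, 0] := by
  ext i j
  fin_cases i <;> fin_cases j <;> simp [CharTwo.neg_eq]

theorem derivedStep_skewT_two {K : Type*} [Field K] [CharP K 2] :
    derivedStep K _ (skewT K 2 K) = Submodule.span K {!![0, 1; -1, 0]} := by
  apply le_antisymm
  · rw [derivedStep, Submodule.span_le]
    rintro z ⟨x, hx, y, hy, rfl⟩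
    rw [commutator_of_isSymm (mem_skewT_iff_isSymm.mp hx) (mem_skewT_iff_isSymm.mp hy)]
    exact Submodule.smul_mem _ _ (Submodule.mem_span_singleton_self _)
  · rw [Submodule.span_le, Set.singleton_subset_iff]
    exact Submodule.subset_span ⟨_, symplectic_mem_skewT, _, single_zero_zero_mem_skewT,
      symplectic_eq_commutator_single_zero_zero⟩

end Matrix

/-- In characteristic `2`, the skew-symmetric (= symmetric) `2 × 2` matrices
over `K` form a Lie algebra which is solvable of derived length exactly `2` but not
nilpotent. -/
theorem skewT_M2_field_char_two_derived_length_two_not_nilpotent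
    (K : Type*) [Field K] (hK : ringChar K = 2) :
    lieDerSeries K (Matrix (Fin 2) (Fin 2) K) (skewT K 2 K) 2 = ⊥ ∧
    lieDerSeries K (Matrix (Fin 2) (Fin 2) K) (skewT K 2 K) 1 ≠ ⊥ ∧
    ¬ ∃ m, lowerCentral K (Matrix (Fin 2) (Fin 2) K) (skewT K 2 K) m = ⊥ := by
  have := ringChar.of_eq hK
  have hJ : (!![0, 1; -1, 0] : Matrix (Fin 2) (Fin 2) K) ≠ 0 := fun h => by
    simpa using congrFun (congrFun h 0) 1
  have hder : lieDerSeries K _ (skewT K 2 K) 1 = Submodule.span K {!![0, 1; -1, 0]} :=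
    derivedStep_skewT_two
  refine ⟨?_, ?_, ?_⟩
  · change derivedStep K _ (lieDerSeries K _ (skewT K 2 K) 1) = ⊥
    rw [hder]
    exact derivedStep_span_singleton _
  · rwa [hder, Ne, Submodule.span_singleton_eq_bot]
  · rintro ⟨m, hm⟩
    exact lowerCentral_ne_bot_of_eq_commutator symplectic_mem_skewT single_zero_zero_mem_skewT
      symplectic_eq_commutator_single_zero_zero hJ m hm
end

section
/- Let K be any field and n ≥ 3. Then the Lie algebra of skew-symmetric n×n matrices over K with respect to transpose (K_{M_n(K)} = {X : X^T = -X}) is not solvable. -/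
open Matrix

lemma transpose_stdBasisMatrix' {K : Type*} [Field K] {m : Type*} [DecidableEq m]
    (i j : m) (a : K) : (Matrix.single i j a)ᵀ = Matrix.single j i a := by
  ext i' j'
  simp [Matrix.single, and_comm]

/-- For any field `K` and any `n ≥ 3`, the Lie algebra of skew-symmetric
`n × n` matrices over `K` is not solvable. -/
theorem skewT_Mn_field_not_solvable
    (K : Type*) [Field K] (n : ℕ) (hn : 3 ≤ n) :
    ¬ ∃ m, lieDerSeries K (Matrix (Fin n) (Fin n) K) (skewT K n K) m = ⊥ := by
  rintro ⟨m, hm⟩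
  set i0 : Fin n := ⟨0, by omega⟩
  set i1 : Fin n := ⟨1, by omega⟩
  set i2 : Fin n := ⟨2, by omega⟩
  have h01 : i0 ≠ i1 := by simp [i0, i1, Fin.ext_iff]
  have h02 : i0 ≠ i2 := by simp [i0, i2, Fin.ext_iff]
  have h12 : i1 ≠ i2 := by simp [i1, i2, Fin.ext_iff]
  set E : Fin n → Fin n → Matrix (Fin n) (Fin n) K := fun a b => Matrix.single a b 1 with hE
  set e1 := E i0 i1 - E i1 i0 with he1
  set e2 := E i0 i2 - E i2 i0 with he2
  set e3 := E i1 i2 - E i2 i1 with he3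
  have mul_same : ∀ a b c : Fin n, E a b * E b c = E a c := by
    intro a b c
    show Matrix.single a b 1 * Matrix.single b c 1 = Matrix.single a c 1
    rw [Matrix.single_mul_single_same, one_mul]
  have mul_ne : ∀ (a b c d : Fin n), b ≠ c → E a b * E c d = 0 := by
    intro a b c d h
    exact Matrix.single_mul_single_of_ne (c := (1:K)) a b c h 1
  have c12 : e1 * e2 - e2 * e1 = -e3 := by
    rw [he1, he2, he3]
    simp only [sub_mul, mul_sub, mul_same,
      mul_ne _ _ _ _ h01.symm, mul_ne _ _ _ _ h12.symm,
      mul_ne _ _ _ _ h02, mul_ne _ _ _ _ h02.symm,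
      mul_ne _ _ _ _ h12, mul_ne _ _ _ _ h01]
    abel
  have c13 : e1 * e3 - e3 * e1 = e2 := by
    rw [he1, he2, he3]
    simp only [sub_mul, mul_sub, mul_same,
      mul_ne _ _ _ _ h01.symm, mul_ne _ _ _ _ h12.symm,
      mul_ne _ _ _ _ h02, mul_ne _ _ _ _ h02.symm,
      mul_ne _ _ _ _ h12, mul_ne _ _ _ _ h01]
    abel
  have c23 : e2 * e3 - e3 * e2 = -e1 := by
    rw [he1, he2, he3]
    simp only [sub_mul, mul_sub, mul_same,
      mul_ne _ _ _ _ h01.symm, mul_ne _ _ _ _ h12.symm,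
      mul_ne _ _ _ _ h02, mul_ne _ _ _ _ h02.symm,
      mul_ne _ _ _ _ h12, mul_ne _ _ _ _ h01]
    abel
  have skewE : ∀ a b : Fin n, (E a b - E b a) ∈ skewT K n K := by
    intro a b
    show (E a b - E b a)ᵀ = -(E a b - E b a)
    rw [transpose_sub]
    show (Matrix.single a b 1)ᵀ - (Matrix.single b a 1)ᵀ = _
    rw [transpose_stdBasisMatrix', transpose_stdBasisMatrix']
    show E b a - E a b = -(E a b - E b a)
    abel
  have key : ∀ k, e1 ∈ lieDerSeries K (Matrix (Fin n) (Fin n) K) (skewT K n K) k ∧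
      e2 ∈ lieDerSeries K (Matrix (Fin n) (Fin n) K) (skewT K n K) k ∧
      e3 ∈ lieDerSeries K (Matrix (Fin n) (Fin n) K) (skewT K n K) k := by
    intro k
    induction k with
    | zero => exact ⟨skewE i0 i1, skewE i0 i2, skewE i1 i2⟩
    | succ k ih =>
      obtain ⟨h1, h2, h3⟩ := ih
      refine ⟨?_, ?_, ?_⟩
      · have hmem : e3 * e2 - e2 * e3 ∈ derivedStep K (Matrix (Fin n) (Fin n) K)
            (lieDerSeries K (Matrix (Fin n) (Fin n) K) (skewT K n K) k) :=
          Submodule.subset_span ⟨e3, h3, e2, h2, rfl⟩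
        have heq : e3 * e2 - e2 * e3 = e1 := by
          have h := c23
          have : -(e2 * e3 - e3 * e2) = -(-e1) := by rw [h]
          simpa [neg_sub] using this
        rwa [heq] at hmem
      · have hmem : e1 * e3 - e3 * e1 ∈ derivedStep K (Matrix (Fin n) (Fin n) K)
            (lieDerSeries K (Matrix (Fin n) (Fin n) K) (skewT K n K) k) :=
          Submodule.subset_span ⟨e1, h1, e3, h3, rfl⟩
        rwa [c13] at hmem
      · have hmem : e2 * e1 - e1 * e2 ∈ derivedStep K (Matrix (Fin n) (Fin n) K)
            (lieDerSeries K (Matrix (Fin n) (Fin n) K) (skewT K n K) k) :=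
          Submodule.subset_span ⟨e2, h2, e1, h1, rfl⟩
        have heq : e2 * e1 - e1 * e2 = e3 := by
          have h := c12
          have : -(e1 * e2 - e2 * e1) = -(-e3) := by rw [h]
          simpa [neg_sub] using this
        rwa [heq] at hmem
  have h1 := (key m).1
  rw [hm, Submodule.mem_bot] at h1
  have happ : e1 i0 i1 = 0 := by rw [h1]; rfl
  have hv : e1 i0 i1 = 1 := by
    rw [he1]
    show Matrix.single i0 i1 (1:K) i0 i1 - Matrix.single i1 i0 (1:K) i0 i1 = 1
    rw [Matrix.single_apply_same, Matrix.single_apply_of_ne, sub_zero]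
    rintro ⟨h, -⟩; exact h01 h.symm
  rw [happ] at hv
  exact zero_ne_one hv
end

section
/- Let K be a field of characteristic 2. The Lie algebra K_{M_2(K[x,x^{-1}])} of matrices F ∈ M_2(K[x,x^{-1}]) satisfying F_{ji}(x^{-1}) = -F_{ij}(x) for all i, j, is solvable of derived length exactly 3 but is not Lie nilpotent. -/
open Matrix

/-- The skew-symmetric elements of `M₂(K[x,x⁻¹])` with respect to the involution
`(fᵢⱼ(x)) ↦ (fⱼᵢ(x⁻¹))`, as a `K`-submodule. -/
def skewLaurent (K : Type*) [Field K] :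
    Submodule K (Matrix (Fin 2) (Fin 2) (LaurentPolynomial K)) where
  carrier := {F | ∀ i j, LaurentPolynomial.invert (F j i) = - F i j}
  add_mem' := by
    intro a b ha hb i j
    simp only [Matrix.add_apply, map_add, ha i j, hb i j, neg_add]
  zero_mem' := by
    intro i j
    simp
  smul_mem' := by
    intro c x hx i j
    simp only [Matrix.smul_apply]
    rw [_root_.map_smul, hx i j, smul_neg]

section Aux

variable (K : Type*) [Field K]

/-- Matrices with equal diagonal entries. -/
def diagEqSub : Submodule K (Matrix (Fin 2) (Fin 2) (LaurentPolynomial K)) where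
  carrier := {F | F 1 1 = F 0 0}
  add_mem' := by intro a b ha hb; simp only [Set.mem_setOf_eq] at *; simp [ha, hb]
  zero_mem' := by simp
  smul_mem' := by intro c x hx; simp only [Set.mem_setOf_eq] at *; simp [hx]

/-- Scalar-type matrices: zero off-diagonal, equal diagonal. -/
def scalSub : Submodule K (Matrix (Fin 2) (Fin 2) (LaurentPolynomial K)) where
  carrier := {F | F 0 1 = 0 ∧ F 1 0 = 0 ∧ F 1 1 = F 0 0}
  add_mem' := by
    intro a b ha hb
    simp only [Set.mem_setOf_eq] at *
    refine ⟨?_, ?_, ?_⟩ <;> simp [ha.1, hb.1, ha.2.1, hb.2.1, ha.2.2, hb.2.2]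
  zero_mem' := by simp
  smul_mem' := by
    intro c x hx
    simp only [Set.mem_setOf_eq] at *
    refine ⟨?_, ?_, ?_⟩ <;> simp [hx.1, hx.2.1, hx.2.2]

theorem mem_skewLaurent_iff (x : Matrix (Fin 2) (Fin 2) (LaurentPolynomial K)) :
    x ∈ skewLaurent K ↔ ∀ i j, LaurentPolynomial.invert (x j i) = - x i j := Iff.rfl

theorem mem_diagEqSub_iff (x : Matrix (Fin 2) (Fin 2) (LaurentPolynomial K)) :
    x ∈ diagEqSub K ↔ x 1 1 = x 0 0 := Iff.rfl

theorem mem_scalSub_iff (x : Matrix (Fin 2) (Fin 2) (LaurentPolynomial K)) :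
    x ∈ scalSub K ↔ x 0 1 = 0 ∧ x 1 0 = 0 ∧ x 1 1 = x 0 0 := Iff.rfl

end Aux

/-- In characteristic `2`, the Lie algebra of skew-symmetric elements of
`M₂(K[x,x⁻¹])` (w.r.t. the involution combining transpose with `x ↦ x⁻¹`) is solvable of
derived length exactly `3` but not Lie nilpotent. -/
theorem skewLaurent_char_two_derived_length_three_not_nilpotent
    (K : Type*) [Field K] (hK : ringChar K = 2) :
    lieDerSeries K (Matrix (Fin 2) (Fin 2) (LaurentPolynomial K)) (skewLaurent K) 3 = ⊥ ∧
    lieDerSeries K (Matrix (Fin 2) (Fin 2) (LaurentPolynomial K)) (skewLaurent K) 2 ≠ ⊥ ∧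
    ¬ ∃ m, lowerCentral K (Matrix (Fin 2) (Fin 2) (LaurentPolynomial K))
        (skewLaurent K) m = ⊥ := by
  classical
  haveI : CharP K 2 := hK ▸ ringChar.charP K
  have h2 : (2 : K) = 0 := by exact_mod_cast CharP.cast_eq_zero K 2
  -- In characteristic two, negation is the identity on Laurent polynomials.
  have nself : ∀ p : LaurentPolynomial K, -p = p := by
    intro p
    have hp : p + p = 0 := by rw [← two_smul K p, h2, zero_smul]
    exact neg_eq_of_add_eq_zero_left hp
  -- the bracket of two skew elements is skew
  have brL : ∀ x y : Matrix (Fin 2) (Fin 2) (LaurentPolynomial K), x ∈ skewLaurent K → y ∈ skewLaurent K → x * y - y * x ∈ skewLaurent K := by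
    intro x y hx hy
    rw [mem_skewLaurent_iff] at hx hy ⊢
    intro i j
    simp only [Matrix.sub_apply, Matrix.mul_apply, Fin.sum_univ_two, _root_.map_sub, _root_.map_add, _root_.map_mul]
    rw [hx 0 j, hx 1 j, hy i 0, hy i 1, hy 0 j, hy 1 j, hx i 0, hx i 1]
    ring
  -- the bracket of two skew elements has equal diagonal entries
  have brDiag : ∀ x y : Matrix (Fin 2) (Fin 2) (LaurentPolynomial K), (x * y - y * x) 1 1 = (x * y - y * x) 0 0 := by
    intro x y
    have : (x * y - y * x) 1 1 = -((x * y - y * x) 0 0) := by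
      simp only [Matrix.sub_apply, Matrix.mul_apply, Fin.sum_univ_two]
      ring
    rw [this, nself]
  -- the bracket of two equal-diagonal skew elements is scalar-type
  have brScal : ∀ x y : Matrix (Fin 2) (Fin 2) (LaurentPolynomial K), x ∈ diagEqSub K → y ∈ diagEqSub K →
      x * y - y * x ∈ scalSub K := by
    intro x y hx hy
    rw [mem_diagEqSub_iff] at hx hy
    rw [mem_scalSub_iff]
    refine ⟨?_, ?_, brDiag x y⟩ <;>
    · simp only [Matrix.sub_apply, Matrix.mul_apply, Fin.sum_univ_two, hx, hy]
      ring
  -- scalar-type matrices commute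
  have brZero : ∀ x y : Matrix (Fin 2) (Fin 2) (LaurentPolynomial K), x ∈ scalSub K → y ∈ scalSub K → x * y - y * x = 0 := by
    intro x y hx hy
    rw [mem_scalSub_iff] at hx hy
    ext i j
    fin_cases i <;> fin_cases j <;>
      simp [Matrix.mul_apply, Fin.sum_univ_two, hx.1, hx.2.1, hy.1, hy.2.1, mul_comm]
  -- the three special matrices
  set D : Matrix (Fin 2) (Fin 2) (LaurentPolynomial K) := !![1, 0; 0, 0] with hD'
  set X : Matrix (Fin 2) (Fin 2) (LaurentPolynomial K) := !![0, 1; 1, 0] with hX'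
  set P : Matrix (Fin 2) (Fin 2) (LaurentPolynomial K) := !![0, LaurentPolynomial.T 1; LaurentPolynomial.T (-1), 0] with hP'
  have hD : D ∈ skewLaurent K := by
    rw [mem_skewLaurent_iff]
    intro i j
    fin_cases i <;> fin_cases j <;> simp [hD', nself]
  have hX : X ∈ skewLaurent K := by
    rw [mem_skewLaurent_iff]
    intro i j
    fin_cases i <;> fin_cases j <;> simp [hX', nself]
  have hP : P ∈ skewLaurent K := by
    rw [mem_skewLaurent_iff]
    intro i j
    fin_cases i <;> fin_cases j <;> simp [hP', nself]
  have hXeq : X = D * X - X * D := by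
    ext i j
    fin_cases i <;> fin_cases j <;>
      simp [hD', hX', Matrix.mul_apply, Fin.sum_univ_two, nself]
  have hPeq : P = D * P - P * D := by
    ext i j
    fin_cases i <;> fin_cases j <;>
      simp [hD', hP', Matrix.mul_apply, Fin.sum_univ_two, nself]
  have hXeq2 : X = X * D - D * X := by
    ext i j
    fin_cases i <;> fin_cases j <;>
      simp [hD', hX', Matrix.mul_apply, Fin.sum_univ_two, nself]
  have hX1 : X ∈ lieDerSeries K _ (skewLaurent K) 1 :=
    Submodule.subset_span ⟨D, hD, X, hX, hXeq⟩
  have hP1 : P ∈ lieDerSeries K _ (skewLaurent K) 1 :=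
    Submodule.subset_span ⟨D, hD, P, hP, hPeq⟩
  have hW2 : P * X - X * P ∈ lieDerSeries K _ (skewLaurent K) 2 :=
    Submodule.subset_span ⟨P, hP1, X, hX1, rfl⟩
  refine ⟨?_, ?_, ?_⟩
  · -- derived length 3 : the third derived subalgebra is trivial
    have step1 : lieDerSeries K _ (skewLaurent K) 1 ≤ skewLaurent K ⊓ diagEqSub K := by
      rw [show lieDerSeries K _ (skewLaurent K) 1 = derivedStep K _ (skewLaurent K) from rfl, derivedStep,
        Submodule.span_le]
      rintro z ⟨x, hx, y, hy, rfl⟩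
      exact Submodule.mem_inf.mpr ⟨brL x y hx hy, brDiag x y⟩
    have step2 : lieDerSeries K _ (skewLaurent K) 2 ≤ scalSub K := by
      rw [show lieDerSeries K _ (skewLaurent K) 2 = derivedStep K _ (lieDerSeries K _ (skewLaurent K) 1) from rfl,
        derivedStep, Submodule.span_le]
      rintro z ⟨x, hx, y, hy, rfl⟩
      exact brScal x y (Submodule.mem_inf.mp (step1 hx)).2
        (Submodule.mem_inf.mp (step1 hy)).2
    have step3 : lieDerSeries K _ (skewLaurent K) 3 ≤ ⊥ := by
      rw [show lieDerSeries K _ (skewLaurent K) 3 = derivedStep K _ (lieDerSeries K _ (skewLaurent K) 2) from rfl,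
        derivedStep, Submodule.span_le]
      rintro z ⟨x, hx, y, hy, rfl⟩
      rw [brZero x y (step2 hx) (step2 hy)]
      exact Submodule.zero_mem ⊥
    exact le_bot_iff.mp step3
  · -- the second derived subalgebra is nontrivial
    intro hbot
    rw [hbot] at hW2
    have hW0 : P * X - X * P = 0 := Submodule.mem_bot K |>.mp hW2
    have h00 : (P * X - X * P) 0 0 = 0 := by rw [hW0]; simp
    have hTT : (LaurentPolynomial.T 1 : LaurentPolynomial K) = LaurentPolynomial.T (-1) := by
      have := h00
      simp only [hP', hX'] at this
      simp [Matrix.mul_apply, Fin.sum_univ_two, sub_eq_zero] at this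
      exact this
    have h2' : (Finsupp.single (1 : ℤ) (1 : K)) = Finsupp.single (-1) 1 := congrArg AddMonoidAlgebra.coeff hTT
    rw [Finsupp.single_eq_single_iff] at h2'
    simp at h2'
  · -- not nilpotent : X lies in every term of the lower central series
    rintro ⟨m, hm⟩
    have hXn : ∀ n, X ∈ lowerCentral K _ (skewLaurent K) n := by
      intro n
      induction n with
      | zero => exact hX
      | succ n ih => exact Submodule.subset_span ⟨X, ih, D, hD, hXeq2⟩
    have hX0 : X = 0 := Submodule.mem_bot K |>.mp (hm ▸ hXn m)
    have : X 0 1 = 0 := by rw [hX0]; simp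
    rw [hX'] at this
    simp at this
end

section
/- Let K be a field with char(K) ≠ 2. The Lie algebra K_{M_2(K[x,x^{-1}])} of matrices F ∈ M_2(K[x,x^{-1}]) satisfying F_{ji}(x^{-1}) = -F_{ij}(x) for all i, j is not solvable. -/
open Matrix

section AuxSkewLaurent
open LaurentPolynomial

noncomputable def wL (K : Type*) [Field K] : LaurentPolynomial K := T 1 - T (-1)

lemma wL_ne_zero (K : Type*) [Field K] : wL K ≠ 0 := by
  intro h
  rw [wL, sub_eq_zero] at h
  have : ((1:ℤ) = -1 ∧ (1:K) = 1) ∨ ((1:K) = 0 ∧ (1:K) = 0) :=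
    AddMonoidAlgebra.single_inj.mp h
  rcases this with ⟨h1, _⟩ | ⟨h1, _⟩ <;> simp at h1

lemma invert_wL (K : Type*) [Field K] : invert (wL K) = - wL K := by
  simp [wL, invert_T]

noncomputable def Gmat (K : Type*) [Field K] (a : ℕ) :
    Matrix (Fin 2) (Fin 2) (LaurentPolynomial K) :=
  !![0, (wL K)^a; (-1)^(a+1) * (wL K)^a, 0]

noncomputable def Dmat (K : Type*) [Field K] (e : ℕ) :
    Matrix (Fin 2) (Fin 2) (LaurentPolynomial K) :=
  !![(wL K)^e, 0; 0, -(wL K)^e]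

lemma comm_GG (K : Type*) [Field K] (a b : ℕ) (ha : Even a) (hb : Odd b) :
    Gmat K a * Gmat K b - Gmat K b * Gmat K a = (2:K) • Dmat K (a+b) := by
  have h1 : ((-1 : LaurentPolynomial K))^(a+1) = -1 := (Even.add_one ha).neg_one_pow
  have h2 : ((-1 : LaurentPolynomial K))^(b+1) = 1 := (Odd.add_one hb).neg_one_pow
  ext i j : 2
  fin_cases i <;> fin_cases j <;>
    simp [Gmat, Dmat, Matrix.mul_apply, Fin.sum_univ_two, Algebra.smul_def, map_ofNat, h1, h2,
      pow_add] <;> ring <;> rw [show ∀ p : LaurentPolynomial K, p * 2 = (2:K) • p from fun p => by rw [mul_comm, Algebra.smul_def, map_ofNat]] <;> simp [mul_comm]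

lemma comm_DG (K : Type*) [Field K] (e c : ℕ) (he : Odd e) :
    Dmat K e * Gmat K c - Gmat K c * Dmat K e = (2:K) • Gmat K (e+c) := by
  have h1 : ((-1 : LaurentPolynomial K))^(e+c+1) = (-1)^(c+1) * (-1 : LaurentPolynomial K) := by
    rw [show e + c + 1 = (c+1) + e by ring, pow_add, he.neg_one_pow]
  ext i j : 2
  fin_cases i <;> fin_cases j <;>
    simp [Gmat, Dmat, Matrix.mul_apply, Fin.sum_univ_two, Algebra.smul_def, map_ofNat, h1,
      pow_add] <;> ring <;> rw [show ∀ p : LaurentPolynomial K, p * 2 = (2:K) • p from fun p => by rw [mul_comm, Algebra.smul_def, map_ofNat]] <;> simp [mul_comm]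

lemma Gmat_mem (K : Type*) [Field K] (a : ℕ) : Gmat K a ∈ skewLaurent K := by
  have keysq : ((-1 : LaurentPolynomial K))^a * (-1)^a = 1 := by
    rw [← pow_add]; exact Even.neg_one_pow ⟨a, rfl⟩
  have key2 : ((-1 : LaurentPolynomial K))^(a+1) = -(-1)^a := by rw [pow_succ]; ring
  have h2a : ((-1 : LaurentPolynomial K))^(a*2) = 1 := by
    rw [pow_mul, sq, keysq]
  have hw : invert ((wL K)^a) = (-1)^a * (wL K)^a := by
    rw [map_pow, invert_wL, neg_pow]
  show ∀ i j, invert (Gmat K a j i) = - Gmat K a i j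
  simp only [Fin.forall_fin_two]
  refine ⟨⟨?_, ?_⟩, ?_, ?_⟩
  all_goals simp [Gmat, hw, key2, h2a, _root_.map_mul, map_neg, mul_assoc]
  all_goals rw [← mul_assoc, keysq, one_mul]
lemma Dmat_mem (K : Type*) [Field K] (e : ℕ) (he : Odd e) : Dmat K e ∈ skewLaurent K := by
  have hw : invert ((wL K)^e) = -(wL K)^e := by
    rw [map_pow, invert_wL]; rw [neg_pow, he.neg_one_pow]; ring
  show ∀ i j, invert (Dmat K e j i) = - Dmat K e i j
  rw [Fin.forall_fin_two]
  constructor <;> rw [Fin.forall_fin_two] <;> constructor <;>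
    simp [Dmat, hw]

lemma invariant (K : Type*) [Field K] (h2 : (2:K) ≠ 0) (m : ℕ) :
    ∃ a b e : ℕ, Even a ∧ Odd b ∧ Odd e ∧
      Gmat K a ∈ lieDerSeries K _ (skewLaurent K) m ∧
      Gmat K b ∈ lieDerSeries K _ (skewLaurent K) m ∧
      Dmat K e ∈ lieDerSeries K _ (skewLaurent K) m := by
  induction m with
  | zero =>
    exact ⟨0, 1, 1, Even.zero, odd_one, odd_one, Gmat_mem K 0, Gmat_mem K 1,
      Dmat_mem K 1 odd_one⟩
  | succ m ih =>
    obtain ⟨a, b, e, ha, hb, he, hGa, hGb, hD⟩ := ih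
    have key : ∀ (M x y : Matrix (Fin 2) (Fin 2) (LaurentPolynomial K)),
        x ∈ lieDerSeries K _ (skewLaurent K) m →
        y ∈ lieDerSeries K _ (skewLaurent K) m →
        x * y - y * x = (2:K) • M →
        M ∈ lieDerSeries K _ (skewLaurent K) (m+1) := by
      intro M x y hx hy hxy
      have h : x * y - y * x ∈ lieDerSeries K _ (skewLaurent K) (m+1) :=
        Submodule.subset_span ⟨x, hx, y, hy, rfl⟩
      rw [hxy] at h
      have h' := Submodule.smul_mem _ ((2:K)⁻¹) h
      rwa [smul_smul, inv_mul_cancel₀ h2, one_smul] at h'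
    exact ⟨e + b, e + a, a + b, he.add_odd hb, he.add_even ha, ha.add_odd hb,
      key _ _ _ hD hGb (comm_DG K e b he),
      key _ _ _ hD hGa (comm_DG K e a he),
      key _ _ _ hGa hGb (comm_GG K a b ha hb)⟩


end AuxSkewLaurent

/-- If `char K ≠ 2`, the Lie algebra of skew-symmetric elements of
`M₂(K[x,x⁻¹])` (w.r.t. the involution combining transpose with `x ↦ x⁻¹`) is not
solvable. -/
theorem skewLaurent_not_solvable_char_ne_two
    (K : Type*) [Field K] (hK : ringChar K ≠ 2) :
    ¬ ∃ m, lieDerSeries K (Matrix (Fin 2) (Fin 2) (LaurentPolynomial K))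
        (skewLaurent K) m = ⊥ := by
  rintro ⟨m, hm⟩
  have h2 : (2:K) ≠ 0 := Ring.two_ne_zero hK
  obtain ⟨a, b, e, ha, hb, he, hGa, -, -⟩ := invariant K h2 m
  rw [hm, Submodule.mem_bot] at hGa
  have hentry : (wL K)^a = 0 := by
    have := congrFun (congrFun hGa 0) 1
    simpa [Gmat] using this
  exact pow_ne_zero a (wL_ne_zero K) hentry
end

section
/- In M_2(A) for A a unital K-algebra with char(K) ≠ 2 and non-trivial involution ♮, let u ∈ A satisfy u = -u^♮ ≠ 0 and suppose A is an integral domain. Define A_1 = ((0,u),(u,0)), B_1 = ((u,0),(0,-u)), and recursively X_m = [A_m, B_m], A_{m+1} = [X_m, B_m], B_{m+1} = [X_m, A_m]. Then for every m ≥ 1 there exists v_m ∈ A with 0 ≠ v_m = -v_m^♮ such that A_m = ((0, v_m),(v_m, 0)), B_m = ((-1)^{m+1} v_m · diag(1,-1)), and X_m = (-1)^m 2 v_m^2 (E_{12} - E_{21}) ≠ 0, with v_{m+1} = 4 v_m^3. -/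
/-!
Of the three shapes `!![0, v; v, 0]`, `!![w, 0; 0, -w]` and `!![0, x; -x, 0]`, the commutator of
two has the third shape, its entry being up to sign the anticommutator of the two entries. Here
every entry is a signed power of `u`, so these anticommutators are just `±2 v w`; this propagates
the shapes with `v_{m+1} = 4 v_m ^ 3`. Since `2 ≠ 0` in the domain `A`, no `v_m` and no `X_m`
vanishes.
-/

open Matrix

section Brackets

variable {R : Type*} [Ring R]

theorem offDiag_bracket_diag (v w : R) :
    !![0, v; v, 0] * !![w, 0; 0, -w] - !![w, 0; 0, -w] * !![0, v; v, 0] =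
      !![0, -(v * w + w * v); v * w + w * v, 0] := by
  simp only [mul_fin_two]
  ext i j; fin_cases i <;> fin_cases j <;> simp [add_comm, sub_eq_add_neg]

theorem skew_bracket_diag (x w : R) :
    !![0, x; -x, 0] * !![w, 0; 0, -w] - !![w, 0; 0, -w] * !![0, x; -x, 0] =
      !![0, -(x * w + w * x); -(x * w + w * x), 0] := by
  simp only [mul_fin_two]
  ext i j; fin_cases i <;> fin_cases j <;> simp [add_comm, sub_eq_add_neg]

theorem skew_bracket_offDiag (x v : R) :
    !![0, x; -x, 0] * !![0, v; v, 0] - !![0, v; v, 0] * !![0, x; -x, 0] =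
      !![x * v + v * x, 0; 0, -(x * v + v * x)] := by
  simp only [mul_fin_two]
  ext i j; fin_cases i <;> fin_cases j <;> simp [add_comm, sub_eq_add_neg]

theorem signedDiag_eq (n : ℕ) (v : R) :
    !![(-1 : R) ^ (n + 1) * v, 0; 0, (-1) ^ n * v] =
      !![(-1) ^ (n + 1) * v, 0; 0, -((-1) ^ (n + 1) * v)] := by
  simp [pow_succ]

variable (n : ℕ) (v : R)

theorem bracket_offDiag_signedDiag :
    !![0, v; v, 0] * !![(-1 : R) ^ (n + 1) * v, 0; 0, (-1) ^ n * v] -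
        !![(-1 : R) ^ (n + 1) * v, 0; 0, (-1) ^ n * v] * !![0, v; v, 0] =
      !![0, (-1) ^ n * (2 * v ^ 2); -((-1) ^ n * (2 * v ^ 2)), 0] := by
  rw [signedDiag_eq, offDiag_bracket_diag]
  ext i j
  rcases neg_one_pow_eq_or R n with h | h <;> fin_cases i <;> fin_cases j <;>
    simp [pow_succ, h] <;> noncomm_ring

theorem bracket_skew_signedDiag :
    !![0, (-1) ^ n * (2 * v ^ 2); -((-1) ^ n * (2 * v ^ 2)), 0] *
        !![(-1 : R) ^ (n + 1) * v, 0; 0, (-1) ^ n * v] -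
        !![(-1 : R) ^ (n + 1) * v, 0; 0, (-1) ^ n * v] *
          !![0, (-1) ^ n * (2 * v ^ 2); -((-1) ^ n * (2 * v ^ 2)), 0] =
      !![0, 4 * v ^ 3; 4 * v ^ 3, 0] := by
  rw [signedDiag_eq, skew_bracket_diag]
  ext i j
  rcases neg_one_pow_eq_or R n with h | h <;> fin_cases i <;> fin_cases j <;>
    simp [pow_succ, h] <;> noncomm_ring

theorem bracket_skew_offDiag :
    !![0, (-1) ^ n * (2 * v ^ 2); -((-1) ^ n * (2 * v ^ 2)), 0] * !![0, v; v, 0] -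
        !![0, v; v, 0] * !![0, (-1) ^ n * (2 * v ^ 2); -((-1) ^ n * (2 * v ^ 2)), 0] =
      !![(-1 : R) ^ (n + 1 + 1) * (4 * v ^ 3), 0; 0, (-1) ^ (n + 1) * (4 * v ^ 3)] := by
  rw [skew_bracket_offDiag]
  ext i j
  rcases neg_one_pow_eq_or R n with h | h <;> fin_cases i <;> fin_cases j <;>
    simp [pow_succ, h] <;> noncomm_ring

end Brackets

section CubeSeq

variable {R : Type*} [Ring R]

def cubeSeq (u : R) : ℕ → R
  | 0 => u
  | n + 1 => 4 * cubeSeq u n ^ 3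

theorem star_cubeSeq [StarRing R] {u : R} (hu : star u = -u) (n : ℕ) :
    star (cubeSeq u n) = -cubeSeq u n := by
  induction n with
  | zero => exact hu
  | succ n ih => simp only [cubeSeq, star_mul, star_pow, ih, star_ofNat]; noncomm_ring

theorem cubeSeq_ne_zero [NoZeroDivisors R] (h2 : (2 : R) ≠ 0) {u : R} (hu : u ≠ 0) (n : ℕ) :
    cubeSeq u n ≠ 0 := by
  have h4 : (4 : R) ≠ 0 := by
    rw [show (4 : R) = 2 * 2 by norm_num]
    exact mul_ne_zero h2 h2
  induction n with
  | zero => exact hu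
  | succ n ih => exact mul_ne_zero h4 (pow_ne_zero 3 ih)

theorem bracket_recursion_eq_cubeSeq {u : R} {Am Bm Xm : ℕ → Matrix (Fin 2) (Fin 2) R}
    (hA1 : Am 1 = !![0, u; u, 0]) (hB1 : Bm 1 = !![u, 0; 0, -u])
    (hX : ∀ m, 1 ≤ m → Xm m = Am m * Bm m - Bm m * Am m)
    (hA : ∀ m, 1 ≤ m → Am (m + 1) = Xm m * Bm m - Bm m * Xm m)
    (hB : ∀ m, 1 ≤ m → Bm (m + 1) = Xm m * Am m - Am m * Xm m) (n : ℕ) :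
    Am (n + 1) = !![0, cubeSeq u n; cubeSeq u n, 0] ∧
      Bm (n + 1) = !![(-1) ^ (n + 1 + 1) * cubeSeq u n, 0; 0, (-1) ^ (n + 1) * cubeSeq u n] := by
  induction n with
  | zero => exact ⟨hA1, by simp [hB1, cubeSeq]⟩
  | succ n ih =>
    obtain ⟨hAn, hBn⟩ := ih
    have hXn := hX (n + 1) (Nat.le_add_left 1 n)
    rw [hAn, hBn, bracket_offDiag_signedDiag] at hXn
    constructor
    · rw [hA (n + 1) (Nat.le_add_left 1 n), hXn, hBn, bracket_skew_signedDiag, cubeSeq]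
    · rw [hB (n + 1) (Nat.le_add_left 1 n), hXn, hAn, bracket_skew_offDiag, cubeSeq]

end CubeSeq

theorem two_ne_zero_of_ringChar_ne_two {K A : Type*} [Field K] [Ring A] [Nontrivial A]
    [Algebra K A] (hK : ringChar K ≠ 2) : (2 : A) ≠ 0 := by
  have h := (algebraMap K A).injective.ne (Ring.two_ne_zero hK)
  rwa [map_ofNat, map_zero] at h

theorem skew_M2_recursion_char_ne_two_general
    (K : Type*) [Field K] (hK : ringChar K ≠ 2)
    (A : Type*) [Ring A] [IsDomain A] [Algebra K A] [StarRing A]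
    (u : A) (hu : star u = -u) (hu0 : u ≠ 0)
    (Am Bm Xm : ℕ → Matrix (Fin 2) (Fin 2) A)
    (hA1 : Am 1 = !![0, u; u, 0])
    (hB1 : Bm 1 = !![u, 0; 0, -u])
    (hX : ∀ m, 1 ≤ m → Xm m = Am m * Bm m - Bm m * Am m)
    (hA : ∀ m, 1 ≤ m → Am (m + 1) = Xm m * Bm m - Bm m * Xm m)
    (hB : ∀ m, 1 ≤ m → Bm (m + 1) = Xm m * Am m - Am m * Xm m) :
    ∃ v : ℕ → A, v 1 = u ∧ ∀ m, 1 ≤ m →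
      v (m + 1) = 4 * (v m) ^ 3 ∧
      v m ≠ 0 ∧ star (v m) = -(v m) ∧
      Am m = !![0, v m; v m, 0] ∧
      Bm m = !![(-1 : A) ^ (m + 1) * v m, 0; 0, (-1 : A) ^ m * v m] ∧
      Xm m = !![0, (-1 : A) ^ m * (2 * (v m) ^ 2);
                -((-1 : A) ^ m * (2 * (v m) ^ 2)), 0] ∧
      Xm m ≠ 0 := by
  have h2 : (2 : A) ≠ 0 := two_ne_zero_of_ringChar_ne_two hK
  refine ⟨fun m => cubeSeq u (m - 1), rfl, fun m hm => ?_⟩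
  obtain ⟨n, rfl⟩ := Nat.exists_eq_add_of_le' hm
  simp only [Nat.add_sub_cancel]
  obtain ⟨hAn, hBn⟩ := bracket_recursion_eq_cubeSeq hA1 hB1 hX hA hB n
  have hXn : Xm (n + 1) = !![0, (-1) ^ (n + 1) * (2 * cubeSeq u n ^ 2);
      -((-1) ^ (n + 1) * (2 * cubeSeq u n ^ 2)), 0] := by
    rw [hX _ hm, hAn, hBn, bracket_offDiag_signedDiag]
  have hvn := cubeSeq_ne_zero h2 hu0 n
  refine ⟨rfl, hvn, star_cubeSeq hu n, hAn, hBn, hXn, fun h0 => ?_⟩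
  have h01 := congr_fun₂ h0 0 1
  rw [hXn] at h01
  exact mul_ne_zero (pow_ne_zero _ (neg_ne_zero.2 one_ne_zero))
    (mul_ne_zero h2 (pow_ne_zero 2 hvn)) h01

/-- The inductive construction witnessing non-solvability of the skew Lie
algebra of `M₂(A)` when `char K ≠ 2` and the involution is non-trivial: the recursively
defined matrices `Aₘ, Bₘ, Xₘ` keep the displayed shape with `vₘ₊₁ = 4 vₘ³` and `Xₘ ≠ 0`. -/
theorem skew_M2_recursion_char_ne_two
    (K : Type*) [Field K] [StarRing K] [TrivialStar K] (hK : ringChar K ≠ 2)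
    (A : Type*) [Ring A] [IsDomain A] [Algebra K A] [StarRing A] [StarModule K A]
    (u : A) (hu : star u = -u) (hu0 : u ≠ 0)
    (Am Bm Xm : ℕ → Matrix (Fin 2) (Fin 2) A)
    (hA1 : Am 1 = !![0, u; u, 0])
    (hB1 : Bm 1 = !![u, 0; 0, -u])
    (hX : ∀ m, 1 ≤ m → Xm m = Am m * Bm m - Bm m * Am m)
    (hA : ∀ m, 1 ≤ m → Am (m + 1) = Xm m * Bm m - Bm m * Xm m)
    (hB : ∀ m, 1 ≤ m → Bm (m + 1) = Xm m * Am m - Am m * Xm m) :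
    ∃ v : ℕ → A, v 1 = u ∧ ∀ m, 1 ≤ m →
      v (m + 1) = 4 * (v m) ^ 3 ∧
      v m ≠ 0 ∧ star (v m) = -(v m) ∧
      Am m = !![0, v m; v m, 0] ∧
      Bm m = !![(-1 : A) ^ (m + 1) * v m, 0; 0, (-1 : A) ^ m * v m] ∧
      Xm m = !![0, (-1 : A) ^ m * (2 * (v m) ^ 2);
                -((-1 : A) ^ m * (2 * (v m) ^ 2)), 0] ∧
      Xm m ≠ 0 :=
  skew_M2_recursion_char_ne_two_general K hK A u hu hu0 Am Bm Xm hA1 hB1 hX hA hB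
end

section
/- In M_n(K) for n ≥ 3 over a field K, define A_1 = a(E_{12}-E_{21}) + b(E_{13}-E_{31}), B_1 = c(E_{23}-E_{32}) with c ≠ 0 and a² + b² ≠ 0, and recursively X_m = [A_m, B_m], A_{m+1} = [X_m, B_m], B_{m+1} = [X_m, A_m]. Then for all m ≥ 1 there exist a_m, b_m, c_m ∈ K with c_m ≠ 0 and a_m² + b_m² ≠ 0 such that A_m = a_m(E_{12}-E_{21}) + b_m(E_{13}-E_{31}), B_m = c_m(E_{23}-E_{32}), and X_m = -b_m c_m (E_{12}-E_{21}) + a_m c_m (E_{13}-E_{31}) ≠ 0; in particular a_{m+1} = -a_m c_m², b_{m+1} = -b_m c_m², c_{m+1} = (a_m² + b_m²) c_m. -/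
open Matrix

/-- Coefficient recursion for the skew construction. -/
def abcRec {K : Type*} [Field K] (a₀ b₀ c₀ : K) : ℕ → K × K × K
  | 0 => (a₀, b₀, c₀)
  | (k + 1) =>
      (-(abcRec a₀ b₀ c₀ k).1 * (abcRec a₀ b₀ c₀ k).2.2 ^ 2,
       -(abcRec a₀ b₀ c₀ k).2.1 * (abcRec a₀ b₀ c₀ k).2.2 ^ 2,
       ((abcRec a₀ b₀ c₀ k).1 ^ 2 + (abcRec a₀ b₀ c₀ k).2.1 ^ 2) * (abcRec a₀ b₀ c₀ k).2.2)

lemma skew_key1 {K : Type*} [Field K] {n : ℕ} (i0 i1 i2 : Fin n)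
    (h01 : i0 ≠ i1) (h02 : i0 ≠ i2) (h12 : i1 ≠ i2) (a b c : K) :
    (a • (Matrix.single i0 i1 (1:K) - Matrix.single i1 i0 1) +
     b • (Matrix.single i0 i2 1 - Matrix.single i2 i0 1)) *
    (c • (Matrix.single i1 i2 (1:K) - Matrix.single i2 i1 1)) -
    (c • (Matrix.single i1 i2 (1:K) - Matrix.single i2 i1 1)) *
    (a • (Matrix.single i0 i1 (1:K) - Matrix.single i1 i0 1) +
     b • (Matrix.single i0 i2 1 - Matrix.single i2 i0 1)) =
    (-b * c) • (Matrix.single i0 i1 (1:K) - Matrix.single i1 i0 1) +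
    (a * c) • (Matrix.single i0 i2 1 - Matrix.single i2 i0 1) := by
  simp only [smul_sub, smul_mul_assoc, mul_smul_comm, sub_mul, mul_sub, add_mul, mul_add,
    single_mul_single_same, single_mul_single_of_ne, h01, h02, h12, h01.symm, h02.symm,
    h12.symm, Ne, not_false_iff, one_mul, smul_zero, sub_zero, zero_sub, smul_neg]
  module

lemma skew_key2 {K : Type*} [Field K] {n : ℕ} (i0 i1 i2 : Fin n)
    (h01 : i0 ≠ i1) (h02 : i0 ≠ i2) (h12 : i1 ≠ i2) (x y a b : K) :
    (x • (Matrix.single i0 i1 (1:K) - Matrix.single i1 i0 1) +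
     y • (Matrix.single i0 i2 1 - Matrix.single i2 i0 1)) *
    (a • (Matrix.single i0 i1 (1:K) - Matrix.single i1 i0 1) +
     b • (Matrix.single i0 i2 1 - Matrix.single i2 i0 1)) -
    (a • (Matrix.single i0 i1 (1:K) - Matrix.single i1 i0 1) +
     b • (Matrix.single i0 i2 1 - Matrix.single i2 i0 1)) *
    (x • (Matrix.single i0 i1 (1:K) - Matrix.single i1 i0 1) +
     y • (Matrix.single i0 i2 1 - Matrix.single i2 i0 1)) =
    (y * a - x * b) • (Matrix.single i1 i2 (1:K) - Matrix.single i2 i1 1) := by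
  simp only [smul_sub, smul_mul_assoc, mul_smul_comm, sub_mul, mul_sub, add_mul, mul_add,
    single_mul_single_same, single_mul_single_of_ne, h01, h02, h12, h01.symm, h02.symm,
    h12.symm, Ne, not_false_iff, one_mul, smul_zero, sub_zero, zero_sub, smul_neg]
  module

lemma skew_entry01 {K : Type*} [Field K] {n : ℕ} (i0 i1 i2 : Fin n)
    (h01 : i0 ≠ i1) (h02 : i0 ≠ i2) (h12 : i1 ≠ i2) (x y : K) :
    ((x • (Matrix.single i0 i1 (1:K) - Matrix.single i1 i0 1) +
     y • (Matrix.single i0 i2 1 - Matrix.single i2 i0 1) : Matrix (Fin n) (Fin n) K)) i0 i1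
      = x := by
  simp [single_apply_of_ne, h01, h02, h12, h01.symm, h02.symm, h12.symm]

lemma skew_entry02 {K : Type*} [Field K] {n : ℕ} (i0 i1 i2 : Fin n)
    (h01 : i0 ≠ i1) (h02 : i0 ≠ i2) (h12 : i1 ≠ i2) (x y : K) :
    ((x • (Matrix.single i0 i1 (1:K) - Matrix.single i1 i0 1) +
     y • (Matrix.single i0 i2 1 - Matrix.single i2 i0 1) : Matrix (Fin n) (Fin n) K)) i0 i2
      = y := by
  simp [single_apply_of_ne, h01, h02, h12, h01.symm, h02.symm, h12.symm]

/-- The inductive construction in `Mₙ(K)` (`n ≥ 3`) of skew-symmetric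
matrices `Aₘ, Bₘ, Xₘ` with `Xₘ ≠ 0` at every stage, with the stated recurrences for the
coefficients. -/
theorem skewT_Mn_recursion
    (K : Type*) [Field K] (n : ℕ) (hn : 3 ≤ n)
    (a₀ b₀ c₀ : K) (hc₀ : c₀ ≠ 0) (hab₀ : a₀ ^ 2 + b₀ ^ 2 ≠ 0)
    (Am Bm Xm : ℕ → Matrix (Fin n) (Fin n) K)
    (hA1 : Am 1 = a₀ • (Matrix.single ⟨0, by omega⟩ ⟨1, by omega⟩ (1 : K) -
                    Matrix.single ⟨1, by omega⟩ ⟨0, by omega⟩ 1) +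
                  b₀ • (Matrix.single ⟨0, by omega⟩ ⟨2, by omega⟩ 1 -
                    Matrix.single ⟨2, by omega⟩ ⟨0, by omega⟩ 1))
    (hB1 : Bm 1 = c₀ • (Matrix.single ⟨1, by omega⟩ ⟨2, by omega⟩ (1 : K) -
                    Matrix.single ⟨2, by omega⟩ ⟨1, by omega⟩ 1))
    (hX : ∀ m, 1 ≤ m → Xm m = Am m * Bm m - Bm m * Am m)
    (hA : ∀ m, 1 ≤ m → Am (m + 1) = Xm m * Bm m - Bm m * Xm m)
    (hB : ∀ m, 1 ≤ m → Bm (m + 1) = Xm m * Am m - Am m * Xm m) :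
    ∃ a b c : ℕ → K, a 1 = a₀ ∧ b 1 = b₀ ∧ c 1 = c₀ ∧ ∀ m, 1 ≤ m →
      a (m + 1) = -(a m) * (c m) ^ 2 ∧
      b (m + 1) = -(b m) * (c m) ^ 2 ∧
      c (m + 1) = ((a m) ^ 2 + (b m) ^ 2) * c m ∧
      c m ≠ 0 ∧ (a m) ^ 2 + (b m) ^ 2 ≠ 0 ∧
      Am m = a m • (Matrix.single ⟨0, by omega⟩ ⟨1, by omega⟩ (1 : K) -
                Matrix.single ⟨1, by omega⟩ ⟨0, by omega⟩ 1) +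
              b m • (Matrix.single ⟨0, by omega⟩ ⟨2, by omega⟩ 1 -
                Matrix.single ⟨2, by omega⟩ ⟨0, by omega⟩ 1) ∧
      Bm m = c m • (Matrix.single ⟨1, by omega⟩ ⟨2, by omega⟩ (1 : K) -
                Matrix.single ⟨2, by omega⟩ ⟨1, by omega⟩ 1) ∧
      Xm m = (-(b m) * c m) • (Matrix.single ⟨0, by omega⟩ ⟨1, by omega⟩ (1 : K) -
                Matrix.single ⟨1, by omega⟩ ⟨0, by omega⟩ 1) +
              (a m * c m) • (Matrix.single ⟨0, by omega⟩ ⟨2, by omega⟩ 1 -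
                Matrix.single ⟨2, by omega⟩ ⟨0, by omega⟩ 1) ∧
      Xm m ≠ 0 := by
  have h01 : (⟨0, by omega⟩ : Fin n) ≠ ⟨1, by omega⟩ := by simp [Fin.ext_iff]
  have h02 : (⟨0, by omega⟩ : Fin n) ≠ ⟨2, by omega⟩ := by simp [Fin.ext_iff]
  have h12 : (⟨1, by omega⟩ : Fin n) ≠ ⟨2, by omega⟩ := by simp [Fin.ext_iff]
  have inv : ∀ k : ℕ,
      (abcRec a₀ b₀ c₀ k).2.2 ≠ 0 ∧
      (abcRec a₀ b₀ c₀ k).1 ^ 2 + (abcRec a₀ b₀ c₀ k).2.1 ^ 2 ≠ 0 ∧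
      Am (k + 1) = (abcRec a₀ b₀ c₀ k).1 •
          (Matrix.single ⟨0, by omega⟩ ⟨1, by omega⟩ (1 : K) -
            Matrix.single ⟨1, by omega⟩ ⟨0, by omega⟩ 1) +
        (abcRec a₀ b₀ c₀ k).2.1 •
          (Matrix.single ⟨0, by omega⟩ ⟨2, by omega⟩ 1 -
            Matrix.single ⟨2, by omega⟩ ⟨0, by omega⟩ 1) ∧
      Bm (k + 1) = (abcRec a₀ b₀ c₀ k).2.2 •
          (Matrix.single ⟨1, by omega⟩ ⟨2, by omega⟩ (1 : K) -
            Matrix.single ⟨2, by omega⟩ ⟨1, by omega⟩ 1) := by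
    intro k
    induction k with
    | zero => exact ⟨hc₀, hab₀, hA1, hB1⟩
    | succ k ih =>
      obtain ⟨hc, hab, hAm, hBm⟩ := ih
      set a := (abcRec a₀ b₀ c₀ k).1
      set b := (abcRec a₀ b₀ c₀ k).2.1
      set c := (abcRec a₀ b₀ c₀ k).2.2
      have hXm : Xm (k + 1) =
          (-b * c) • (Matrix.single ⟨0, by omega⟩ ⟨1, by omega⟩ (1 : K) -
            Matrix.single ⟨1, by omega⟩ ⟨0, by omega⟩ 1) +
          (a * c) • (Matrix.single ⟨0, by omega⟩ ⟨2, by omega⟩ 1 -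
            Matrix.single ⟨2, by omega⟩ ⟨0, by omega⟩ 1) := by
        rw [hX (k + 1) (by omega), hAm, hBm]
        exact skew_key1 _ _ _ h01 h02 h12 a b c
      refine ⟨?_, ?_, ?_, ?_⟩
      · show (a ^ 2 + b ^ 2) * c ≠ 0
        exact mul_ne_zero hab hc
      · show (-a * c ^ 2) ^ 2 + (-b * c ^ 2) ^ 2 ≠ 0
        have : (-a * c ^ 2) ^ 2 + (-b * c ^ 2) ^ 2 = (a ^ 2 + b ^ 2) * (c ^ 2) ^ 2 := by
          ring
        rw [this]
        exact mul_ne_zero hab (pow_ne_zero _ (pow_ne_zero _ hc))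
      · rw [hA (k + 1) (by omega), hXm, hBm,
          skew_key1 _ _ _ h01 h02 h12 (-b * c) (a * c) c]
        show _ = (-a * c ^ 2) • _ + (-b * c ^ 2) • _
        module
      · rw [hB (k + 1) (by omega), hXm, hAm,
          skew_key2 _ _ _ h01 h02 h12 (-b * c) (a * c) a b]
        show _ = ((a ^ 2 + b ^ 2) * c) • _
        module
  refine ⟨fun m => (abcRec a₀ b₀ c₀ (m - 1)).1, fun m => (abcRec a₀ b₀ c₀ (m - 1)).2.1,
    fun m => (abcRec a₀ b₀ c₀ (m - 1)).2.2, rfl, rfl, rfl, ?_⟩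
  intro m hm
  obtain ⟨k, rfl⟩ : ∃ k, m = k + 1 := ⟨m - 1, by omega⟩
  obtain ⟨hc, hab, hAm, hBm⟩ := inv k
  simp only [Nat.add_sub_cancel]
  set a := (abcRec a₀ b₀ c₀ k).1
  set b := (abcRec a₀ b₀ c₀ k).2.1
  set c := (abcRec a₀ b₀ c₀ k).2.2
  have hXm : Xm (k + 1) =
      (-b * c) • (Matrix.single ⟨0, by omega⟩ ⟨1, by omega⟩ (1 : K) -
        Matrix.single ⟨1, by omega⟩ ⟨0, by omega⟩ 1) +
      (a * c) • (Matrix.single ⟨0, by omega⟩ ⟨2, by omega⟩ 1 -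
        Matrix.single ⟨2, by omega⟩ ⟨0, by omega⟩ 1) := by
    rw [hX (k + 1) (by omega), hAm, hBm]
    exact skew_key1 _ _ _ h01 h02 h12 a b c
  refine ⟨rfl, rfl, rfl, hc, hab, hAm, hBm, hXm, ?_⟩
  intro h0
  rw [hXm] at h0
  have e1 : -b * c = 0 := by
    have := congrFun (congrFun h0 ⟨0, by omega⟩) ⟨1, by omega⟩
    rwa [skew_entry01 _ _ _ h01 h02 h12] at this
  have e2 : a * c = 0 := by
    have := congrFun (congrFun h0 ⟨0, by omega⟩) ⟨2, by omega⟩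
    rwa [skew_entry02 _ _ _ h01 h02 h12] at this
  have ha : a = 0 := by
    rcases mul_eq_zero.mp e2 with h | h
    · exact h
    · exact absurd h hc
  have hb : b = 0 := by
    rcases mul_eq_zero.mp e1 with h | h
    · simpa using h
    · exact absurd h hc
  exact hab (by rw [ha, hb]; ring)
end

section
/- For any field K and any n ≥ 3, there exist a, b, c ∈ K with c ≠ 0 and a² + b² ≠ 0 (e.g., a = 1, b = 0, c = 1), and consequently the Lie algebra so_n(K) = {X ∈ M_n(K) : X^T = -X} satisfies so_n(K)^(m) ≠ 0 for all m ≥ 0. -/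
open Matrix

section SonAux
variable {K : Type*} [Field K] {n : ℕ}

private def EE (K : Type*) [Field K] {n : ℕ} (i j : Fin n) : Matrix (Fin n) (Fin n) K :=
  Matrix.single i j 1 - Matrix.single j i 1

private lemma stdT (i j : Fin n) : (Matrix.single i j (1:K))ᵀ = Matrix.single j i 1 := by
  ext a b
  simp [Matrix.single, transpose_apply, and_comm]

private lemma EE_skew (i j : Fin n) : (EE K i j)ᵀ = -(EE K i j) := by
  simp [EE, transpose_sub, stdT]

private lemma EE_ne_zero {i j : Fin n} (h : i ≠ j) : EE K i j ≠ 0 := by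
  intro hz
  have := congrFun (congrFun hz i) j
  simp [EE, Matrix.single_apply_same, h.symm] at this

private lemma comm1 {i j k : Fin n} (hij : i ≠ j) (hik : i ≠ k) (hjk : j ≠ k) :
    EE K (n := n) j k = (EE K i k) * (EE K i j) - (EE K i j) * (EE K i k) := by
  simp only [EE, sub_mul, mul_sub, mul_one, Matrix.single_mul_single_same,
    Matrix.single_mul_single_of_ne _ _ _ _ (hij), Matrix.single_mul_single_of_ne _ _ _ _ (hik),
    Matrix.single_mul_single_of_ne _ _ _ _ (hjk), Matrix.single_mul_single_of_ne _ _ _ _ (hij.symm),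
    Matrix.single_mul_single_of_ne _ _ _ _ (hik.symm), Matrix.single_mul_single_of_ne _ _ _ _ (hjk.symm)]
  abel

private lemma comm2 {i j k : Fin n} (hij : i ≠ j) (hik : i ≠ k) (hjk : j ≠ k) :
    EE K (n := n) i k = (EE K i j) * (EE K j k) - (EE K j k) * (EE K i j) := by
  simp only [EE, sub_mul, mul_sub, mul_one, Matrix.single_mul_single_same,
    Matrix.single_mul_single_of_ne _ _ _ _ (hij), Matrix.single_mul_single_of_ne _ _ _ _ (hik),
    Matrix.single_mul_single_of_ne _ _ _ _ (hjk), Matrix.single_mul_single_of_ne _ _ _ _ (hij.symm),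
    Matrix.single_mul_single_of_ne _ _ _ _ (hik.symm), Matrix.single_mul_single_of_ne _ _ _ _ (hjk.symm)]
  abel

private lemma comm3 {i j k : Fin n} (hij : i ≠ j) (hik : i ≠ k) (hjk : j ≠ k) :
    EE K (n := n) i j = (EE K j k) * (EE K i k) - (EE K i k) * (EE K j k) := by
  simp only [EE, sub_mul, mul_sub, mul_one, Matrix.single_mul_single_same,
    Matrix.single_mul_single_of_ne _ _ _ _ (hij), Matrix.single_mul_single_of_ne _ _ _ _ (hik),
    Matrix.single_mul_single_of_ne _ _ _ _ (hjk), Matrix.single_mul_single_of_ne _ _ _ _ (hij.symm),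
    Matrix.single_mul_single_of_ne _ _ _ _ (hik.symm), Matrix.single_mul_single_of_ne _ _ _ _ (hjk.symm)]
  abel

end SonAux

/-- For any field `K` there exist `a, b, c ∈ K` with `c ≠ 0` and
`a² + b² ≠ 0`, and consequently for `n ≥ 3` every term of the derived series of the Lie
algebra of skew-symmetric `n × n` matrices is nonzero. -/
theorem exists_abc_and_son_derived_ne_bot
    (K : Type*) [Field K] (n : ℕ) (hn : 3 ≤ n) :
    (∃ a b c : K, c ≠ 0 ∧ a ^ 2 + b ^ 2 ≠ 0) ∧
    ∀ m : ℕ, lieDerSeries K (Matrix (Fin n) (Fin n) K) (skewT K n K) m ≠ ⊥ := by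
  refine ⟨⟨1, 0, 1, one_ne_zero, by norm_num⟩, ?_⟩
  set i : Fin n := ⟨0, by omega⟩
  set j : Fin n := ⟨1, by omega⟩
  set k : Fin n := ⟨2, by omega⟩
  have hij : i ≠ j := by simp [i, j, Fin.ext_iff]
  have hik : i ≠ k := by simp [i, k, Fin.ext_iff]
  have hjk : j ≠ k := by simp [j, k, Fin.ext_iff]
  have key : ∀ m : ℕ,
      EE K i j ∈ lieDerSeries K (Matrix (Fin n) (Fin n) K) (skewT K n K) m ∧
      EE K i k ∈ lieDerSeries K (Matrix (Fin n) (Fin n) K) (skewT K n K) m ∧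
      EE K j k ∈ lieDerSeries K (Matrix (Fin n) (Fin n) K) (skewT K n K) m := by
    intro m
    induction m with
    | zero =>
        exact ⟨EE_skew i j, EE_skew i k, EE_skew j k⟩
    | succ m ih =>
        obtain ⟨h1, h2, h3⟩ := ih
        refine ⟨?_, ?_, ?_⟩ <;>
          [( exact Submodule.subset_span ⟨_, h3, _, h2, comm3 hij hik hjk⟩);
           ( exact Submodule.subset_span ⟨_, h1, _, h3, comm2 hij hik hjk⟩);
           ( exact Submodule.subset_span ⟨_, h2, _, h1, comm1 hij hik hjk⟩)]
  intro m hbot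
  have hm := (key m).1
  rw [hbot] at hm
  exact EE_ne_zero hij (Submodule.mem_bot K |>.mp hm)
end
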